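/- arXiv:2404.04464 — 2 statements merged into one kernel-verified Lean document; each statement's English description precedes it below -/
import Mathlib

section
/- Let (x_n)_{n∈I} be a frame for H with canonical dual (y_n) and suppose E = {1} satisfies the MRC, i.e., ⟨y_1, x_1⟩ ≠ 1 after one erasure. Then the sequence v_n = y_n + (⟨y_n, x_1⟩ / (1 − ⟨y_1, x_1⟩)) y_1, n ≥ 2, is the canonical dual frame of (x_n)_{n≥2}. -/
/-! Removing `x 1` from the frame subtracts the rank-one operator `x 1 ⟪x 1, ·⟫` from the frame
operator `S`. The MRC makes this reduced frame operator injective: if it kills `h`, then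
`∑ n ≠ 1, ‖⟪x n, h⟫‖² = 0`, so `h` is orthogonal to a set with dense span. Injectivity excludes
`⟪x 1, S⁻¹ x 1⟫ = 1`, and then the Sherman–Morrison formula inverts the reduced operator; applied
to `x n` it gives `v n`. -/

noncomputable section

variable {H : Type*} [NormedAddCommGroup H] [InnerProductSpace ℂ H] [CompleteSpace H]

/-- `(x n)_{n ∈ I}` is a frame for `H` with frame bounds `A`, `B`. -/
def IsFrameOn (x : ℕ → H) (I : Set ℕ) (A B : ℝ) : Prop :=
  0 < A ∧ 0 < B ∧ ∀ h : H,
    Summable (fun n : I => ‖(inner ℂ (x n) h : ℂ)‖ ^ 2) ∧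
    A * ‖h‖ ^ 2 ≤ ∑' n : I, ‖(inner ℂ (x n) h : ℂ)‖ ^ 2 ∧
    ∑' n : I, ‖(inner ℂ (x n) h : ℂ)‖ ^ 2 ≤ B * ‖h‖ ^ 2

/-- `(y n)_{n ∈ I}` is the canonical dual of `(x n)_{n ∈ I}`. -/
def IsCanonicalDualOn (y x : ℕ → H) (I : Set ℕ) : Prop :=
  ∃ S Sinv : H →L[ℂ] H,
    (∀ h : H, HasSum (fun n : I => (inner ℂ (x n) h : ℂ) • x n) (S h)) ∧
    Sinv.comp S = ContinuousLinearMap.id ℂ H ∧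
    S.comp Sinv = ContinuousLinearMap.id ℂ H ∧
    ∀ n ∈ I, y n = Sinv (x n)

open ContinuousLinearMap InnerProductSpace Submodule

theorem HasSum.subtype_diff_singleton {ι M : Type*} [AddCommGroup M] [TopologicalSpace M]
    [IsTopologicalAddGroup M] {f : ι → M} {I : Set ι} {a : M} {i : ι}
    (hf : HasSum (fun n : I => f n) a) (hi : i ∈ I) :
    HasSum (fun n : (I \ {i} : Set ι) => f n) (a - f i) := by
  classical
  have h := hasSum_ite_sub_hasSum (hasSum_subtype_iff_indicator.mp hf) i
  rw [Set.indicator_of_mem hi] at h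
  refine hasSum_subtype_iff_indicator.mpr (h.congr_fun fun n => ?_)
  by_cases hn : n = i <;> simp [Set.indicator_apply, hn]

section
variable {𝕜 E : Type*} [RCLike 𝕜] [NormedAddCommGroup E] [InnerProductSpace 𝕜 E]

theorem inner_eq_zero_of_hasSum_inner_smul_eq_zero {ι : Type*} {x : ι → E} {v : E}
    (h : HasSum (fun n => inner 𝕜 (x n) v • x n) 0) (n : ι) : inner 𝕜 (x n) v = 0 := by
  have hnorm : HasSum (fun n => ‖inner 𝕜 (x n) v‖ ^ 2) 0 := by
    have := RCLike.hasSum_re 𝕜 ((innerSL 𝕜 v).hasSum h)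
    simp only [innerSL_apply_apply, inner_smul_right, map_zero] at this
    refine this.congr_fun fun n => ?_
    rw [← inner_conj_symm v (x n), RCLike.mul_conj, ← RCLike.ofReal_pow, RCLike.ofReal_re]
  simpa using congrFun ((hasSum_zero_iff_of_nonneg fun _ => by positivity).mp hnorm) n

theorem eq_zero_of_hasSum_inner_smul_eq_zero {ι : Type*} {x : ι → E} {v : E}
    (hx : Dense (span 𝕜 (Set.range x) : Set E)) (h : HasSum (fun n => inner 𝕜 (x n) v • x n) 0) :
    v = 0 := by
  refine hx.eq_zero_of_inner_right 𝕜 fun u hu => ?_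
  induction hu using span_induction with
  | mem u hu => obtain ⟨n, rfl⟩ := hu; exact inner_eq_zero_of_hasSum_inner_smul_eq_zero h n
  | zero => exact inner_zero_left _
  | add a b _ _ ha hb => rw [inner_add_left, ha, hb, add_zero]
  | smul r a _ ha => rw [inner_smul_left, ha, mul_zero]

def shermanMorrisonInv (Sinv : E →L[𝕜] E) (u w : E) : E →L[𝕜] E :=
  Sinv + (1 - inner 𝕜 w (Sinv u))⁻¹ • (rankOne 𝕜 (Sinv u) w ∘L Sinv)

theorem shermanMorrisonInv_apply (Sinv : E →L[𝕜] E) (u w v : E) :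
    shermanMorrisonInv Sinv u w v =
      Sinv v + ((1 - inner 𝕜 w (Sinv u))⁻¹ * inner 𝕜 w (Sinv v)) • Sinv u := by
  simp [shermanMorrisonInv, smul_smul]

variable {S Sinv : E →L[𝕜] E} {u w : E}

theorem shermanMorrisonInv_comp_sub_rankOne (hS : Sinv ∘L S = .id 𝕜 E)
    (hc : inner 𝕜 w (Sinv u) ≠ 1) :
    shermanMorrisonInv Sinv u w ∘L (S - rankOne 𝕜 u w) = .id 𝕜 E := by
  have hSinvS (v : E) : Sinv (S v) = v := congrArg (· v) hS
  have hc' : 1 - inner 𝕜 w (Sinv u) ≠ 0 := sub_ne_zero.mpr hc.symm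
  ext v
  simp only [comp_apply, shermanMorrisonInv_apply, sub_apply, rankOne_apply, map_sub, map_smul,
    hSinvS, id_apply]
  have hk : (1 - inner 𝕜 w (Sinv u))⁻¹ * (1 - inner 𝕜 w (Sinv u)) = 1 := inv_mul_cancel₀ hc'
  linear_combination (norm := module) (inner 𝕜 w v • hk) • Sinv u

theorem sub_rankOne_comp_shermanMorrisonInv (hS : S ∘L Sinv = .id 𝕜 E)
    (hc : inner 𝕜 w (Sinv u) ≠ 1) :
    (S - rankOne 𝕜 u w) ∘L shermanMorrisonInv Sinv u w = .id 𝕜 E := by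
  have hSSinv (v : E) : S (Sinv v) = v := congrArg (· v) hS
  have hc' : 1 - inner 𝕜 w (Sinv u) ≠ 0 := sub_ne_zero.mpr hc.symm
  ext v
  simp only [comp_apply, shermanMorrisonInv_apply, sub_apply, rankOne_apply, map_add, map_smul,
    hSSinv, id_apply]
  have hk : (1 - inner 𝕜 w (Sinv u))⁻¹ * (1 - inner 𝕜 w (Sinv u)) = 1 := inv_mul_cancel₀ hc'
  linear_combination (norm := module) (inner 𝕜 w (Sinv v) • hk) • u

theorem inner_apply_ne_one_of_injective_sub_rankOne (hS : S ∘L Sinv = .id 𝕜 E)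
    (hinj : Function.Injective (S - rankOne 𝕜 u w)) : inner 𝕜 w (Sinv u) ≠ 1 := by
  have hSSinv (v : E) : S (Sinv v) = v := congrArg (· v) hS
  intro hc
  have h0 : Sinv u = 0 := hinj (by simp [hSSinv, hc])
  have hu : u = 0 := by rw [← hSSinv u, h0, map_zero]
  simp [hu] at hc

end

theorem stmt7_general (x y : ℕ → H) (I : Set ℕ) (hy : IsCanonicalDualOn y x I) (h1 : (1 : ℕ) ∈ I)
    (hMRC : Dense ((Submodule.span ℂ (x '' (I \ {1})) : Submodule ℂ H) : Set H)) :
    IsCanonicalDualOn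
      (fun n => y n +
        ((inner ℂ (x 1) (y n) : ℂ) / (1 - (inner ℂ (x 1) (y 1) : ℂ))) • y 1)
      x (I \ {1}) := by
  obtain ⟨S, Sinv, hS, hSinvS, hSSinv, hyx⟩ := hy
  have hS' (h : H) : HasSum (fun n : (I \ {1} : Set ℕ) => inner ℂ (x n) h • x n)
      ((S - rankOne ℂ (x 1) (x 1)) h) := by
    rw [sub_apply, rankOne_apply]
    exact HasSum.subtype_diff_singleton (f := fun n => inner ℂ (x n) h • x n) (hS h) h1
  have hinj : Function.Injective (S - rankOne ℂ (x 1) (x 1)) := by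
    refine (injective_iff_map_eq_zero _).mpr fun h h0 => ?_
    rw [Set.image_eq_range] at hMRC
    exact eq_zero_of_hasSum_inner_smul_eq_zero hMRC (h0 ▸ hS' h)
  have hc := inner_apply_ne_one_of_injective_sub_rankOne hSSinv hinj
  refine ⟨_, shermanMorrisonInv Sinv (x 1) (x 1), hS',
    shermanMorrisonInv_comp_sub_rankOne hSinvS hc, sub_rankOne_comp_shermanMorrisonInv hSSinv hc,
    fun n hn => ?_⟩
  simp only [shermanMorrisonInv_apply, hyx n hn.1, hyx 1 h1, div_eq_inv_mul]

/-- If `(y n)` is the canonical dual of the frame `(x n)_{n ∈ I}` and `E = {1}`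
satisfies the MRC, then `v n = y n + (⟨y n, x 1⟩ / (1 − ⟨y 1, x 1⟩)) y 1`, `n ≥ 2`,
is the canonical dual frame of `(x n)_{n ≥ 2}`. -/
theorem stmt7 (x y : ℕ → H) (I : Set ℕ) (A B : ℝ) (hx : IsFrameOn x I A B)
    (hy : IsCanonicalDualOn y x I) (h1 : (1 : ℕ) ∈ I) (hne : I ≠ {1})
    (hMRC : Dense ((Submodule.span ℂ (x '' (I \ {1})) : Submodule ℂ H) : Set H)) :
    IsCanonicalDualOn
      (fun n => y n +
        ((inner ℂ (x 1) (y n) : ℂ) / (1 - (inner ℂ (x 1) (y 1) : ℂ))) • y 1)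
      x (I \ {1}) :=
  stmt7_general x y I hy h1 hMRC

end
end

section
/- Let (x_n)_{n∈I} be a frame, (z_n)_{n∈I} a dual frame, and E = {1,...,k} ⊊ I satisfying the MRC. Suppose the iterative sequences α_n^j = ⟨v_n^{j−1}, x_j⟩/(1 − ⟨v_j^{j−1}, x_j⟩), v_n^j = v_n^{j−1} + α_n^j v_j^{j−1} (with v_n⁰ = z_n) are well defined for j = 1,...,k. Then the operator I − Σ_{i=1}^k θ_{z_i, x_i} is invertible on H, and v_n = (I − Σ_{i=1}^k θ_{z_i, x_i})⁻¹ z_n, n ∈ E^c, is a dual frame of (x_n)_{n∈E^c}. -/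
/-!
Each step of the iteration is a Sherman–Morrison update. If `S` inverts `T` and `⟪y, S w⟫ ≠ 1`,
then `T - θ_{w,y} = T ∘ (1 - θ_{S w,y})` is inverted by `(1 + (1 - ⟪y, S w⟫)⁻¹ θ_{S w,y}) ∘ S`, and
this inverse maps `z n` to exactly the updated vector of the iteration; by induction,
`T = 1 - Σ_{i ≤ k} θ_{z i, x i}` is invertible with `T⁻¹ z n = v_n^k`.

Deleting the terms `i ∈ E` from the reconstruction formula of the dual pair gives
`Σ_{n ∉ E} ⟪x n, h⟫ z n = T h`, and applying `T⁻¹` gives the reconstruction formula for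
`(T⁻¹ z n)_{n ∉ E}`. Its upper frame bound is inherited from `z` through the adjoint of `T⁻¹`; the
lower one follows from `‖h‖² = Σ_{n ∉ E} ⟪x n, h⟫ ⟪h, T⁻¹ z n⟫` and the upper bound of `x`.
-/

noncomputable section

variable {H : Type*} [NormedAddCommGroup H] [InnerProductSpace ℂ H] [CompleteSpace H]

/-- `(z n)_{n ∈ I}` is a dual frame of `(x n)_{n ∈ I}`. -/
def IsDualFrameOn (z x : ℕ → H) (I : Set ℕ) : Prop :=
  (∃ A B : ℝ, IsFrameOn z I A B) ∧
  ∀ h : H, HasSum (fun n : I => (inner ℂ (x n) h : ℂ) • z n) h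

/-- The rank-one operator `θ_{y,x} : h ↦ ⟨h, x⟩ y`. -/
def rankOne (y x : H) : H →L[ℂ] H := (innerSL ℂ x).smulRight y

theorem HasSum.subtype_sdiff_finset {ι G : Type*} [AddCommGroup G] [TopologicalSpace G]
    [IsTopologicalAddGroup G] {f : ι → G} {I : Set ι} {s : Finset ι} {a : G}
    (hs : (s : Set ι) ⊆ I) (hf : HasSum (fun n : I => f n) a) :
    HasSum (fun n : (I \ s : Set ι) => f n) (a - ∑ i ∈ s, f i) := by
  rw [← Function.comp_def, hasSum_subtype_iff_indicator, Set.indicator_sdiff hs]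
  exact (hasSum_subtype_iff_indicator.mp hf).sub (hasSum_subtype_iff_indicator.mp (s.hasSum f))

section RankOne

omit [CompleteSpace H]

theorem rankOne_apply (y x h : H) : rankOne y x h = (inner ℂ x h : ℂ) • y := rfl

theorem comp_rankOne (T : H →L[ℂ] H) (y x : H) : T ∘L rankOne y x = rankOne (T y) x :=
  InnerProductSpace.comp_rankOne y x T

theorem rankOne_comp_rankOne_self (u y : H) :
    rankOne u y ∘L rankOne u y = (inner ℂ y u : ℂ) • rankOne u y :=
  InnerProductSpace.rankOne_comp_rankOne u y u y

/-- Sherman–Morrison formula. -/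
theorem exists_inverse_sub_rankOne {T S : H →L[ℂ] H} (hST : S ∘L T = ContinuousLinearMap.id ℂ H)
    (hTS : T ∘L S = ContinuousLinearMap.id ℂ H) {w y : H} (hd : (inner ℂ y (S w) : ℂ) ≠ 1) :
    ∃ S' : H →L[ℂ] H, S' ∘L (T - rankOne w y) = ContinuousLinearMap.id ℂ H ∧
      (T - rankOne w y) ∘L S' = ContinuousLinearMap.id ℂ H ∧
      ∀ h, S' h = S h + ((inner ℂ y (S h) : ℂ) / (1 - (inner ℂ y (S w) : ℂ))) • S w := by
  set u := S w
  set θ := rankOne u y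
  set c := (1 - (inner ℂ y u : ℂ))⁻¹
  have hc : c * (1 - (inner ℂ y u : ℂ)) = 1 := inv_mul_cancel₀ (sub_ne_zero.mpr hd.symm)
  have hθθ : ∀ h, θ (θ h) = (inner ℂ y u : ℂ) • θ h := fun h =>
    congrArg (· h) (rankOne_comp_rankOne_self u y)
  have hTu : T u = w := by simpa using congrArg (· w) hTS
  have hfactor : T - rankOne w y = T ∘L (ContinuousLinearMap.id ℂ H - θ) := by
    rw [ContinuousLinearMap.comp_sub, comp_rankOne, hTu, ContinuousLinearMap.comp_id]
  set P := ContinuousLinearMap.id ℂ H + c • θ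
  have hPQ : P ∘L (ContinuousLinearMap.id ℂ H - θ) = ContinuousLinearMap.id ℂ H := by
    ext h
    simp only [P, ContinuousLinearMap.comp_apply, add_apply,
      sub_apply, ContinuousLinearMap.id_apply,
      smul_apply, map_sub, hθθ]
    linear_combination (norm := module) hc • θ h
  have hQP : (ContinuousLinearMap.id ℂ H - θ) ∘L P = ContinuousLinearMap.id ℂ H := by
    ext h
    simp only [P, ContinuousLinearMap.comp_apply, add_apply,
      sub_apply, ContinuousLinearMap.id_apply,
      smul_apply, map_add, map_smul, hθθ]
    linear_combination (norm := module) hc • θ h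
  refine ⟨P ∘L S, ?_, ?_, fun h => ?_⟩
  · rw [hfactor, ← ContinuousLinearMap.comp_assoc, ContinuousLinearMap.comp_assoc P,
      hST, ContinuousLinearMap.comp_id, hPQ]
  · rw [hfactor, ← ContinuousLinearMap.comp_assoc, ContinuousLinearMap.comp_assoc T,
      hQP, ContinuousLinearMap.comp_id, hTS]
  · simp only [P, θ, ContinuousLinearMap.comp_apply, add_apply,
      ContinuousLinearMap.id_apply, smul_apply, rankOne_apply, smul_smul,
      div_eq_mul_inv, mul_comm c]
    rfl

end RankOne

section Bessel

def IsBesselOn (x : ℕ → H) (I : Set ℕ) (B : ℝ) : Prop :=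
  ∀ h : H, Summable (fun n : I => ‖(inner ℂ (x n) h : ℂ)‖ ^ 2) ∧
    ∑' n : I, ‖(inner ℂ (x n) h : ℂ)‖ ^ 2 ≤ B * ‖h‖ ^ 2

variable {x w : ℕ → H} {I J : Set ℕ} {A B : ℝ}

omit [CompleteSpace H] in
theorem IsFrameOn.isBesselOn (hx : IsFrameOn x I A B) : IsBesselOn x I B :=
  fun h => ⟨(hx.2.2 h).1, (hx.2.2 h).2.2⟩

omit [CompleteSpace H] in
theorem IsBesselOn.mono_bound {B' : ℝ} (hx : IsBesselOn x I B) (hB : B ≤ B') :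
    IsBesselOn x I B' :=
  fun h => ⟨(hx h).1, (hx h).2.trans (by gcongr)⟩

omit [CompleteSpace H] in
theorem IsBesselOn.mono (hx : IsBesselOn x I B) (hJI : J ⊆ I) : IsBesselOn x J B := by
  intro h
  obtain ⟨hsum, hle⟩ := hx h
  have hsumJ := hsum.comp_injective (Set.inclusion_injective hJI)
  refine ⟨hsumJ, le_trans ?_ hle⟩
  exact hsumJ.tsum_le_tsum_of_inj (Set.inclusion hJI) (Set.inclusion_injective hJI)
    (fun _ _ => by positivity) (fun _ => le_rfl) hsum

theorem IsBesselOn.map (hw : IsBesselOn w I B) (hB : 0 ≤ B) (S : H →L[ℂ] H) :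
    IsBesselOn (fun n => S (w n)) I (B * ‖S‖ ^ 2) := by
  intro h
  have hadj : ∀ n, (inner ℂ (S (w n)) h : ℂ) = inner ℂ (w n) (S.adjoint h) :=
    fun n => (S.adjoint_inner_right (w n) h).symm
  simp only [hadj]
  obtain ⟨hsum, hle⟩ := hw (S.adjoint h)
  refine ⟨hsum, hle.trans ?_⟩
  have hSadj : ‖S.adjoint h‖ ≤ ‖S‖ * ‖h‖ := by
    simpa only [LinearIsometryEquiv.norm_map] using S.adjoint.le_opNorm h
  calc B * ‖S.adjoint h‖ ^ 2 ≤ B * (‖S‖ * ‖h‖) ^ 2 := by gcongr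
    _ = B * ‖S‖ ^ 2 * ‖h‖ ^ 2 := by ring

omit [CompleteSpace H] in
theorem IsBesselOn.inv_mul_norm_sq_le (hx : IsBesselOn x I B) (hB : 0 < B)
    (hw : ∀ h, Summable (fun n : I => ‖(inner ℂ (w n) h : ℂ)‖ ^ 2))
    (hrecon : ∀ h, HasSum (fun n : I => (inner ℂ (x n) h : ℂ) • w n) h) (h : H) :
    B⁻¹ * ‖h‖ ^ 2 ≤ ∑' n : I, ‖(inner ℂ (w n) h : ℂ)‖ ^ 2 := by
  set b : I → ℝ := fun n => ‖(inner ℂ (x n) h : ℂ)‖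
  set c : I → ℝ := fun n => ‖(inner ℂ (w n) h : ℂ)‖
  obtain ⟨hb, hbB⟩ := hx h
  have hc : Summable (fun n => c n ^ 2) := hw h
  have hbc : Summable (fun n => b n * c n) :=
    (hb.add hc).of_nonneg_of_le (fun n => by positivity)
      (fun n => by nlinarith [two_mul_le_add_sq (b n) (c n), norm_nonneg (inner ℂ (x n) h : ℂ),
        norm_nonneg (inner ℂ (w n) h : ℂ)])
  have hterm : ∀ n : I, ‖innerSL ℂ h ((inner ℂ (x n) h : ℂ) • w n)‖ = b n * c n := fun n => by
    rw [innerSL_apply_apply, inner_smul_right, norm_mul, norm_inner_symm h]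
  have hnorm : ‖h‖ ^ 2 ≤ ∑' n : I, b n * c n :=
    calc ‖h‖ ^ 2 = ‖(inner ℂ h h : ℂ)‖ := by simp
      _ = ‖∑' n : I, innerSL ℂ h ((inner ℂ (x n) h : ℂ) • w n)‖ :=
        by rw [((innerSL ℂ h).hasSum (hrecon h)).tsum_eq, innerSL_apply_apply]
      _ ≤ ∑' n : I, ‖innerSL ℂ h ((inner ℂ (x n) h : ℂ) • w n)‖ :=
        norm_tsum_le_tsum_norm (hbc.congr fun n => (hterm n).symm)
      _ = ∑' n : I, b n * c n := tsum_congr hterm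
  -- weighted AM-GM: `2 B b c ≤ b² + B² c²`
  have hamgm : 2 * B * ∑' n : I, b n * c n ≤ ∑' n : I, b n ^ 2 + B ^ 2 * ∑' n : I, c n ^ 2 := by
    rw [← tsum_mul_left, ← tsum_mul_left, ← hb.tsum_add (hc.mul_left _)]
    exact (hbc.mul_left _).tsum_le_tsum (fun n => by nlinarith [sq_nonneg (b n - B * c n)])
      (hb.add (hc.mul_left _))
  rw [inv_mul_le_iff₀ hB]
  nlinarith [mul_le_mul_of_nonneg_left hnorm (by positivity : (0 : ℝ) ≤ 2 * B)]

end Bessel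

theorem IsDualFrameOn.sdiff_finset {x z : ℕ → H} {I : Set ℕ} {B : ℝ}
    (hz : IsDualFrameOn z x I) (hx : IsBesselOn x I B) (hB : 0 < B) {s : Finset ℕ}
    (hs : (s : Set ℕ) ⊆ I) {S : H →L[ℂ] H}
    (hS : S ∘L (ContinuousLinearMap.id ℂ H - ∑ i ∈ s, rankOne (z i) (x i)) =
      ContinuousLinearMap.id ℂ H) :
    IsDualFrameOn (fun n => S (z n)) x (I \ (s : Set ℕ)) := by
  have hrecon : ∀ h, HasSum (fun n : ↥(I \ (s : Set ℕ)) => (inner ℂ (x n) h : ℂ) • S (z n)) h := by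
    intro h
    have hSh : S (h - ∑ i ∈ s, (inner ℂ (x i) h : ℂ) • z i) = h := by
      have hT : (ContinuousLinearMap.id ℂ H - ∑ i ∈ s, rankOne (z i) (x i)) h =
          h - ∑ i ∈ s, (inner ℂ (x i) h : ℂ) • z i := by
        simp only [sub_apply, ContinuousLinearMap.id_apply, sum_apply, rankOne_apply]
      rw [← hT, ← ContinuousLinearMap.comp_apply, hS, ContinuousLinearMap.id_apply]
    have hsum := S.hasSum ((hz.2 h).subtype_sdiff_finset
      (f := fun n => (inner ℂ (x n) h : ℂ) • z n) hs)
    simpa only [hSh, map_smul] using hsum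
  obtain ⟨_, Bz, hzframe⟩ := hz.1
  have hBz := hzframe.2.1
  have hBessel : IsBesselOn (fun n => S (z n)) (I \ (s : Set ℕ)) (Bz * ‖S‖ ^ 2 + 1) :=
    ((hzframe.isBesselOn |>.mono Set.sdiff_subset).map hzframe.2.1.le S).mono_bound (by linarith)
  refine ⟨⟨B⁻¹, Bz * ‖S‖ ^ 2 + 1, inv_pos.mpr hB, by positivity,
    fun h => ⟨(hBessel h).1, ?_, (hBessel h).2⟩⟩, hrecon⟩
  exact (hx.mono Set.sdiff_subset).inv_mul_norm_sq_le (w := fun n => S (z n)) hB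
    (fun h => (hBessel h).1) hrecon h

omit [CompleteSpace H] in
theorem exists_inverse_id_sub_sum_rankOne {x z : ℕ → H} {I : Set ℕ} {k : ℕ}
    (hE : ((Finset.Icc 1 k : Finset ℕ) : Set ℕ) ⊆ I) {v : ℕ → ℕ → H}
    (hv0 : ∀ n ∈ I, v 0 n = z n)
    (hden : ∀ j ∈ Finset.Icc 1 k, (inner ℂ (x j) (v (j - 1) j) : ℂ) ≠ 1)
    (hrec : ∀ j ∈ Finset.Icc 1 k, ∀ n ∈ I \ ((Finset.Icc 1 j : Finset ℕ) : Set ℕ),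
      v j n = v (j - 1) n +
        ((inner ℂ (x j) (v (j - 1) n) : ℂ) / (1 - (inner ℂ (x j) (v (j - 1) j) : ℂ))) •
          v (j - 1) j) :
    ∃ S : H →L[ℂ] H,
      S ∘L (ContinuousLinearMap.id ℂ H - ∑ i ∈ Finset.Icc 1 k, rankOne (z i) (x i)) =
        ContinuousLinearMap.id ℂ H ∧
      (ContinuousLinearMap.id ℂ H - ∑ i ∈ Finset.Icc 1 k, rankOne (z i) (x i)) ∘L S =
        ContinuousLinearMap.id ℂ H := by
  suffices key : ∀ j ≤ k, ∃ S : H →L[ℂ] H,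
      S ∘L (ContinuousLinearMap.id ℂ H - ∑ i ∈ Finset.Icc 1 j, rankOne (z i) (x i)) =
        ContinuousLinearMap.id ℂ H ∧
      (ContinuousLinearMap.id ℂ H - ∑ i ∈ Finset.Icc 1 j, rankOne (z i) (x i)) ∘L S =
        ContinuousLinearMap.id ℂ H ∧
      ∀ n ∈ I \ ((Finset.Icc 1 j : Finset ℕ) : Set ℕ), S (z n) = v j n by
    obtain ⟨S, hST, hTS, -⟩ := key k le_rfl
    exact ⟨S, hST, hTS⟩
  intro j hj
  induction j with
  | zero => exact ⟨ContinuousLinearMap.id ℂ H, by simp, by simp, fun n hn => (hv0 n hn.1).symm⟩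
  | succ j ih =>
    obtain ⟨S, hST, hTS, hSv⟩ := ih (by omega)
    have hjk : j + 1 ∈ Finset.Icc 1 k := Finset.mem_Icc.mpr ⟨by omega, hj⟩
    have hSz : S (z (j + 1)) = v j (j + 1) := hSv _ ⟨hE hjk, by simp⟩
    obtain ⟨S', hS'T, hTS', hS'⟩ :=
      exists_inverse_sub_rankOne hST hTS (by rw [hSz]; exact hden _ hjk)
    have hsplit : ContinuousLinearMap.id ℂ H - ∑ i ∈ Finset.Icc 1 (j + 1), rankOne (z i) (x i) =
        ContinuousLinearMap.id ℂ H - ∑ i ∈ Finset.Icc 1 j, rankOne (z i) (x i) -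
          rankOne (z (j + 1)) (x (j + 1)) := by
      rw [Finset.sum_Icc_succ_top (by omega), sub_add_eq_sub_sub]
    refine ⟨S', hsplit ▸ hS'T, hsplit ▸ hTS', fun n hn => ?_⟩
    have hnj : n ∈ I \ ((Finset.Icc 1 j : Finset ℕ) : Set ℕ) :=
      ⟨hn.1, fun h => hn.2 (by simp only [Finset.coe_Icc, Set.mem_Icc] at h ⊢; omega)⟩
    rw [hS', hSv n hnj, hSz]
    exact (hrec _ hjk n hn).symm

theorem stmt11_general (x z : ℕ → H) (I : Set ℕ) (A B : ℝ) (hx : IsFrameOn x I A B)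
    (hz : IsDualFrameOn z x I) (k : ℕ)
    (hE : ((Finset.Icc 1 k : Finset ℕ) : Set ℕ) ⊂ I)
    (v : ℕ → ℕ → H) (hv0 : ∀ n, v 0 n = z n)
    (hden : ∀ j ∈ Finset.Icc 1 k, (inner ℂ (x j) (v (j - 1) j) : ℂ) ≠ 1)
    (hrec : ∀ j ∈ Finset.Icc 1 k, ∀ n ∈ I \ ((Finset.Icc 1 j : Finset ℕ) : Set ℕ),
      v j n = v (j - 1) n +
        ((inner ℂ (x j) (v (j - 1) n) : ℂ) / (1 - (inner ℂ (x j) (v (j - 1) j) : ℂ))) •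
          v (j - 1) j) :
    ∃ Tinv : H →L[ℂ] H,
      Tinv.comp (ContinuousLinearMap.id ℂ H - ∑ i ∈ Finset.Icc 1 k, rankOne (z i) (x i)) =
        ContinuousLinearMap.id ℂ H ∧
      (ContinuousLinearMap.id ℂ H - ∑ i ∈ Finset.Icc 1 k, rankOne (z i) (x i)).comp Tinv =
        ContinuousLinearMap.id ℂ H ∧
      IsDualFrameOn (fun n => Tinv (z n)) x (I \ ((Finset.Icc 1 k : Finset ℕ) : Set ℕ)) := by
  obtain ⟨S, hST, hTS⟩ := exists_inverse_id_sub_sum_rankOne hE.subset (fun n _ => hv0 n) hden hrec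
  exact ⟨S, hST, hTS, hz.sdiff_finset hx.isBesselOn hx.2.1 hE.subset hST⟩

/-- If the iterative procedure (starting from an arbitrary dual frame `z`) is well
defined through step `k`, then `T = I − Σ_{i=1}^k θ_{z i, x i}` is invertible and
`(T⁻¹ z n)_{n ∈ I \ E}` is a dual frame of `(x n)_{n ∈ I \ E}`, `E = {1,…,k}`. -/
theorem stmt11 (x z : ℕ → H) (I : Set ℕ) (A B : ℝ) (hx : IsFrameOn x I A B)
    (hz : IsDualFrameOn z x I) (k : ℕ)
    (hE : ((Finset.Icc 1 k : Finset ℕ) : Set ℕ) ⊂ I)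
    (hMRC : Dense ((Submodule.span ℂ
      (x '' (I \ (Finset.Icc 1 k : Finset ℕ))) : Submodule ℂ H) : Set H))
    (v : ℕ → ℕ → H) (hv0 : ∀ n, v 0 n = z n)
    (hden : ∀ j ∈ Finset.Icc 1 k, (inner ℂ (x j) (v (j - 1) j) : ℂ) ≠ 1)
    (hrec : ∀ j ∈ Finset.Icc 1 k, ∀ n ∈ I \ ((Finset.Icc 1 j : Finset ℕ) : Set ℕ),
      v j n = v (j - 1) n +
        ((inner ℂ (x j) (v (j - 1) n) : ℂ) / (1 - (inner ℂ (x j) (v (j - 1) j) : ℂ))) •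
          v (j - 1) j) :
    ∃ Tinv : H →L[ℂ] H,
      Tinv.comp (ContinuousLinearMap.id ℂ H - ∑ i ∈ Finset.Icc 1 k, rankOne (z i) (x i)) =
        ContinuousLinearMap.id ℂ H ∧
      (ContinuousLinearMap.id ℂ H - ∑ i ∈ Finset.Icc 1 k, rankOne (z i) (x i)).comp Tinv =
        ContinuousLinearMap.id ℂ H ∧
      IsDualFrameOn (fun n => Tinv (z n)) x (I \ ((Finset.Icc 1 k : Finset ℕ) : Set ℕ)) :=
  stmt11_general x z I A B hx hz k hE v hv0 hden hrec
end
end
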